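/- For each $k \in \{1,2,3\}$ and $l=4$, the determinant of the matrix $\eta^{ij} = \partial g_{(4)}^{ij}/\partial y^k$ is a nonzero constant multiple of $(y^4)^{4-k}$; in particular $\eta$ is nondegenerate exactly on the locus $y^4 \ne 0$ when $k < 4$, and everywhere when $k=4$. -/

import Mathlib

/-- The explicit `B_4` orbit-space metric `g_{(4)}` in the coordinates `y^1, …, y^4`
(`y i` stands for `y^{i+1}`). -/
noncomputable def g4 (y : Fin 4 → ℝ) : Matrix (Fin 4) (Fin 4) ℝ :=
  !![4*y 0,  8*y 1,              12*y 2,                    16*y 3;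
     8*y 1,  4*y 0*y 1+12*y 2,   8*y 0*y 2+16*y 3,          12*y 0*y 3;
     12*y 2, 8*y 0*y 2+16*y 3,   4*y 1*y 2+12*y 0*y 3,      8*y 1*y 3;
     16*y 3, 12*y 0*y 3,         8*y 1*y 3,                 4*y 2*y 3]

/-- `η^{ij} = ∂g_{(4)}^{ij}/∂y^{k+1}` (entrywise partial derivative, `k : Fin 4`). -/
noncomputable def eta4k (k : Fin 4) (y : Fin 4 → ℝ) : Matrix (Fin 4) (Fin 4) ℝ :=
  fun i j => fderiv ℝ (fun z : Fin 4 → ℝ => g4 z i j) y (Pi.single k 1)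

theorem fderiv_eval_apply {𝕜 ι : Type*} [NontriviallyNormedField 𝕜] [Fintype ι] (i : ι)
    (y v : ι → 𝕜) : fderiv 𝕜 (fun z : ι → 𝕜 => z i) y v = v i := by
  rw [(hasFDerivAt_apply i y).fderiv]
  rfl

section Entries

variable (y : Fin 4 → ℝ)

theorem eta4k_zero :
    eta4k 0 y = !![4, 0, 0, 0; 0, 4*y 1, 8*y 2, 12*y 3; 0, 8*y 2, 12*y 3, 0; 0, 12*y 3, 0, 0] := by
  ext i j
  fin_cases i <;> fin_cases j <;>
    simp (disch := fun_prop) [eta4k, g4, fderiv_fun_add, fderiv_fun_mul, fderiv_eval_apply,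
      Pi.single_apply, mul_comm]

theorem eta4k_one :
    eta4k 1 y = !![0, 8, 0, 0; 8, 4*y 0, 0, 0; 0, 0, 4*y 2, 8*y 3; 0, 0, 8*y 3, 0] := by
  ext i j
  fin_cases i <;> fin_cases j <;>
    simp (disch := fun_prop) [eta4k, g4, fderiv_fun_add, fderiv_fun_mul, fderiv_eval_apply,
      Pi.single_apply, mul_comm]

theorem eta4k_two :
    eta4k 2 y = !![0, 0, 12, 0; 0, 12, 8*y 0, 0; 12, 8*y 0, 4*y 1, 0; 0, 0, 0, 4*y 3] := by
  ext i j
  fin_cases i <;> fin_cases j <;>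
    simp (disch := fun_prop) [eta4k, g4, fderiv_fun_add, fderiv_fun_mul, fderiv_eval_apply,
      Pi.single_apply, mul_comm]

theorem eta4k_three :
    eta4k 3 y = !![0, 0, 0, 16; 0, 0, 16, 12*y 0; 0, 16, 12*y 0, 8*y 1; 16, 12*y 0, 8*y 1, 4*y 2] := by
  ext i j
  fin_cases i <;> fin_cases j <;>
    simp (disch := fun_prop) [eta4k, g4, fderiv_fun_add, fderiv_fun_mul, fderiv_eval_apply,
      Pi.single_apply, mul_comm]

theorem det_eta4k_zero : (eta4k 0 y).det = -6912 * y 3 ^ 3 := by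
  rw [eta4k_zero]
  simp [Matrix.det_succ_row_zero, Fin.sum_univ_succ, Fin.succAbove]
  ring

theorem det_eta4k_one : (eta4k 1 y).det = 4096 * y 3 ^ 2 := by
  rw [eta4k_one]
  simp [Matrix.det_succ_row_zero, Fin.sum_univ_succ, Fin.succAbove]
  ring

theorem det_eta4k_two : (eta4k 2 y).det = -6912 * y 3 ^ 1 := by
  rw [eta4k_two]
  simp [Matrix.det_succ_row_zero, Fin.sum_univ_succ, Fin.succAbove]
  ring

theorem det_eta4k_three : (eta4k 3 y).det = 65536 := by
  rw [eta4k_three]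
  simp [Matrix.det_succ_row_zero, Fin.sum_univ_succ, Fin.succAbove]
  norm_num

end Entries

/-- For `k ∈ {1,2,3}` (i.e. `(k : Fin 4).val < 3`), `det η` is a nonzero constant multiple
of `(y^4)^{4-k}`; in particular `η` is nondegenerate exactly on `y^4 ≠ 0`.  For `k = 4`
(`k = 3 : Fin 4`), `det η` is a nonzero constant, so `η` is nondegenerate everywhere. -/
theorem stmt17 :
    (∀ k : Fin 4, (k : ℕ) < 3 →
      ∃ c : ℝ, c ≠ 0 ∧ ∀ y : Fin 4 → ℝ,
        (eta4k k y).det = c * (y 3) ^ (3 - (k : ℕ))) ∧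
    (∀ k : Fin 4, (k : ℕ) < 3 →
      ∀ y : Fin 4 → ℝ, ((eta4k k y).det ≠ 0 ↔ y 3 ≠ 0)) ∧
    (∃ c : ℝ, c ≠ 0 ∧ ∀ y : Fin 4 → ℝ, (eta4k 3 y).det = c) := by
  have det_eq_const_mul_pow : ∀ k : Fin 4, (k : ℕ) < 3 →
      ∃ c : ℝ, c ≠ 0 ∧ ∀ y : Fin 4 → ℝ, (eta4k k y).det = c * (y 3) ^ (3 - (k : ℕ)) := by
    intro k hk
    fin_cases k
    · exact ⟨-6912, by norm_num, det_eta4k_zero⟩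
    · exact ⟨4096, by norm_num, det_eta4k_one⟩
    · exact ⟨-6912, by norm_num, det_eta4k_two⟩
    · exact absurd hk (by decide)
  refine ⟨det_eq_const_mul_pow, fun k hk y => ?_, ⟨65536, by norm_num, det_eta4k_three⟩⟩
  obtain ⟨c, hc, hdet⟩ := det_eq_const_mul_pow k hk
  rw [hdet, mul_ne_zero_iff, pow_ne_zero_iff (by omega)]
  exact and_iff_right hc
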